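/- Let K be an abelian group, T a torsion abelian group, φ₁ : K → K and φ₂ : T → T endomorphisms, and s : K → T a homomorphism whose image s(K) is finite. Let φ : K × T → K × T be the skew product φ(x,y) = (φ₁(x), φ₂(y) + s(x)). Then h(φ) = h(φ₁) + h(φ₂); equivalently, the Addition Theorem AT_h(K × T, φ, 0 × T) holds. -/
import Mathlib


open Pointwise

/-- The `n`-th φ-trajectory `T_n(φ,F) = F + φ(F) + ⋯ + φ^{n-1}(F)` of a finite subset `F`. -/
noncomputable def traj {G : Type*} [AddCommGroup G] (φ : AddMonoid.End G) (F : Finset G)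
    (n : ℕ) : Finset G :=
  letI := Classical.decEq G
  ∑ k ∈ Finset.range n, F.image (φ ^ k)

/-- The algebraic entropy of `φ` with respect to `F`:
`H(φ,F) = lim_n log|T_n(φ,F)|/n = inf_{n ≥ 1} log|T_n(φ,F)|/n`. -/
noncomputable def entWith {G : Type*} [AddCommGroup G] (φ : AddMonoid.End G) (F : Finset G) : ℝ :=
  ⨅ n : ℕ, Real.log ((traj φ F (n + 1)).card) / (n + 1)

section Aux

variable {G : Type*} [AddCommGroup G]

theorem traj_zero (φ : AddMonoid.End G) (F : Finset G) : traj φ F 0 = 0 := by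
  simp [traj]

theorem traj_succ (φ : AddMonoid.End G) (F : Finset G) (n : ℕ) :
    traj φ F (n + 1) = (letI := Classical.decEq G; traj φ F n + F.image ⇑(φ ^ n)) := by
  simp [traj, Finset.sum_range_succ]

theorem image_finsetSum [DecidableEq G] (ψ : AddMonoid.End G) (A : ℕ → Finset G) (n : ℕ) :
    (∑ k ∈ Finset.range n, A k).image ⇑ψ = ∑ k ∈ Finset.range n, (A k).image ⇑ψ := by
  induction n with
  | zero => simp; rfl
  | succ n ih => rw [Finset.sum_range_succ, Finset.sum_range_succ, Finset.image_add, ih]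

theorem traj_add_traj (φ : AddMonoid.End G) (F : Finset G) (m n : ℕ) :
    traj φ F (m + n) = (letI := Classical.decEq G; traj φ F m + (traj φ F n).image ⇑(φ ^ m)) := by
  classical
  unfold traj
  rw [Finset.sum_range_add, image_finsetSum]
  congr 1
  refine Finset.sum_congr rfl fun k _ => ?_
  rw [Finset.image_image, pow_add]
  rfl

theorem traj_nonempty (φ : AddMonoid.End G) {F : Finset G} (hF : F.Nonempty) (n : ℕ) :
    (traj φ F n).Nonempty := by
  classical
  induction n with
  | zero => rw [traj_zero]; exact ⟨0, Finset.mem_zero.2 rfl⟩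
  | succ n ih => rw [traj_succ]; exact ih.add (hF.image _)

theorem one_le_card_traj (φ : AddMonoid.End G) {F : Finset G} (hF : F.Nonempty) (n : ℕ) :
    1 ≤ (traj φ F n).card :=
  Finset.card_pos.2 (traj_nonempty φ hF n)

theorem mem_traj (φ : AddMonoid.End G) (F : Finset G) (n : ℕ) (a : G) :
    a ∈ traj φ F n ↔
      ∃ f : ℕ → G, (∀ k < n, ∃ x ∈ F, (φ ^ k) x = f k) ∧ ∑ k ∈ Finset.range n, f k = a := by
  classical
  induction n generalizing a with
  | zero =>
    rw [traj_zero]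
    simp only [Finset.mem_zero, Finset.range_zero, Finset.sum_empty]
    constructor
    · rintro rfl; exact ⟨fun _ => 0, by omega, rfl⟩
    · rintro ⟨f, -, rfl⟩; rfl
  | succ n ih =>
    rw [traj_succ, Finset.mem_add]
    constructor
    · rintro ⟨b, hb, c, hc, rfl⟩
      obtain ⟨f, hf, hsum⟩ := (ih b).1 hb
      obtain ⟨x, hx, hxc⟩ := Finset.mem_image.1 hc
      refine ⟨fun k => if k = n then c else f k, fun k hk => ?_, ?_⟩
      · rcases Nat.lt_succ_iff_lt_or_eq.1 hk with h | rfl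
        · exact ⟨(hf k h).choose, (hf k h).choose_spec.1, by
            simp only [if_neg h.ne, (hf k h).choose_spec.2]⟩
        · exact ⟨x, hx, by simp [hxc]⟩
      · rw [Finset.sum_range_succ, if_pos rfl,
          Finset.sum_congr rfl fun k hk => if_neg (Finset.mem_range.1 hk).ne, hsum]
    · rintro ⟨f, hf, rfl⟩
      rw [Finset.sum_range_succ]
      refine ⟨_, (ih _).2 ⟨f, fun k hk => hf k (hk.trans n.lt_succ_self), rfl⟩, f n, ?_, rfl⟩
      obtain ⟨x, hx, hxf⟩ := hf n n.lt_succ_self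
      exact Finset.mem_image.2 ⟨x, hx, hxf⟩

end Aux

section Aux2

open Filter Topology

variable {G : Type*} [AddCommGroup G]

theorem card_traj_add_le (φ : AddMonoid.End G) {F : Finset G} (m n : ℕ) :
    (traj φ F (m + n)).card ≤ (traj φ F m).card * (traj φ F n).card := by
  classical
  rw [traj_add_traj]
  exact Finset.card_add_le.trans (Nat.mul_le_mul_left _ (Finset.card_image_le))

theorem traj_subadditive (φ : AddMonoid.End G) {F : Finset G} (hF : F.Nonempty) :
    Subadditive fun n => Real.log ((traj φ F n).card) := by
  intro m n
  have h1 : (0:ℝ) < (traj φ F m).card := by exact_mod_cast one_le_card_traj φ hF m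
  have h2 : (0:ℝ) < (traj φ F n).card := by exact_mod_cast one_le_card_traj φ hF n
  have h0 : (0:ℝ) < (traj φ F (m+n)).card := by exact_mod_cast one_le_card_traj φ hF (m+n)
  rw [← Real.log_mul h1.ne' h2.ne']
  apply Real.log_le_log h0
  exact_mod_cast card_traj_add_le φ m n

theorem entWith_bddBelow (φ : AddMonoid.End G) (F : Finset G) :
    BddBelow (Set.range fun n : ℕ => Real.log ((traj φ F n).card) / n) := by
  refine ⟨0, ?_⟩
  rintro x ⟨n, rfl⟩
  have : (0:ℝ) ≤ Real.log ((traj φ F n).card) := Real.log_natCast_nonneg _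
  positivity

theorem entWith_eq_lim (φ : AddMonoid.End G) (F : Finset G) (hF : F.Nonempty) :
    entWith φ F = (traj_subadditive φ hF).lim := by
  rw [entWith, Subadditive.lim]
  rw [iInf]
  congr 1
  ext x
  simp only [Set.mem_range, Set.mem_image, Set.mem_Ici]
  constructor
  · rintro ⟨m, rfl⟩
    exact ⟨m + 1, by omega, by push_cast; ring⟩
  · rintro ⟨n, hn, rfl⟩
    obtain ⟨m, rfl⟩ := Nat.exists_eq_add_of_le hn
    exact ⟨m, by push_cast; ring⟩

theorem tendsto_entWith (φ : AddMonoid.End G) {F : Finset G} (hF : F.Nonempty) :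
    Tendsto (fun n : ℕ => Real.log ((traj φ F n).card) / n) atTop (𝓝 (entWith φ F)) := by
  rw [entWith_eq_lim φ F hF]
  exact (traj_subadditive φ hF).tendsto_lim (entWith_bddBelow φ F)

theorem entWith_nonneg (φ : AddMonoid.End G) {F : Finset G} (hF : F.Nonempty) :
    0 ≤ entWith φ F := by
  refine le_ciInf fun n => ?_
  have : (0:ℝ) ≤ Real.log ((traj φ F (n+1)).card) := Real.log_natCast_nonneg _
  positivity

theorem entWith_le (φ : AddMonoid.End G) (F : Finset G) (n : ℕ) :
    entWith φ F ≤ Real.log ((traj φ F (n+1)).card) / (n+1) := by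
  refine ciInf_le ⟨0, ?_⟩ n
  rintro x ⟨m, rfl⟩
  have : (0:ℝ) ≤ Real.log ((traj φ F (m+1)).card) := Real.log_natCast_nonneg _
  positivity

theorem entWith_le_add_of_card_le {G₁ G₂ G₃ : Type*} [AddCommGroup G₁] [AddCommGroup G₂]
    [AddCommGroup G₃] {φ : AddMonoid.End G₁} {φ₁ : AddMonoid.End G₂} {φ₂ : AddMonoid.End G₃}
    {F : Finset G₁} {F₁ : Finset G₂} {F₂ : Finset G₃}
    (hF : F.Nonempty) (hF1 : F₁.Nonempty) (hF2 : F₂.Nonempty)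
    (h : ∀ n, (traj φ F n).card ≤ (traj φ₁ F₁ n).card * (traj φ₂ F₂ n).card) :
    entWith φ F ≤ entWith φ₁ F₁ + entWith φ₂ F₂ := by
  refine ge_of_tendsto ((tendsto_entWith φ₁ hF1).add (tendsto_entWith φ₂ hF2)) ?_
  filter_upwards [Filter.eventually_ge_atTop 1] with n hn
  obtain ⟨m, rfl⟩ : ∃ m, n = m + 1 := ⟨n - 1, by omega⟩
  have h1 : (0:ℝ) < (traj φ₁ F₁ (m+1)).card := by exact_mod_cast one_le_card_traj φ₁ hF1 _
  have h2 : (0:ℝ) < (traj φ₂ F₂ (m+1)).card := by exact_mod_cast one_le_card_traj φ₂ hF2 _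
  have h0 : (0:ℝ) < (traj φ F (m+1)).card := by exact_mod_cast one_le_card_traj φ hF _
  have key : Real.log ((traj φ F (m+1)).card) ≤
      Real.log ((traj φ₁ F₁ (m+1)).card) + Real.log ((traj φ₂ F₂ (m+1)).card) := by
    rw [← Real.log_mul h1.ne' h2.ne']
    apply Real.log_le_log h0
    exact_mod_cast h (m+1)
  push_cast
  calc entWith φ F ≤ Real.log ((traj φ F (m+1)).card) / ((m:ℝ)+1) := entWith_le φ F m
    _ ≤ (Real.log ((traj φ₁ F₁ (m+1)).card) + Real.log ((traj φ₂ F₂ (m+1)).card)) / ((m:ℝ)+1) := by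
        gcongr
    _ = Real.log ((traj φ₁ F₁ (m+1)).card) / ((m:ℝ)+1)
        + Real.log ((traj φ₂ F₂ (m+1)).card) / ((m:ℝ)+1) := add_div _ _ _

theorem add_entWith_le_of_card_le {G₁ G₂ G₃ : Type*} [AddCommGroup G₁] [AddCommGroup G₂]
    [AddCommGroup G₃] {φ : AddMonoid.End G₁} {φ₁ : AddMonoid.End G₂} {φ₂ : AddMonoid.End G₃}
    {F : Finset G₁} {F₁ : Finset G₂} {F₂ : Finset G₃}
    (hF1 : F₁.Nonempty) (hF2 : F₂.Nonempty)
    (h : ∀ n, (traj φ₁ F₁ n).card * (traj φ₂ F₂ n).card ≤ (traj φ F n).card) :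
    entWith φ₁ F₁ + entWith φ₂ F₂ ≤ entWith φ F := by
  refine le_ciInf fun m => ?_
  have h1 : (0:ℝ) < (traj φ₁ F₁ (m+1)).card := by exact_mod_cast one_le_card_traj φ₁ hF1 _
  have h2 : (0:ℝ) < (traj φ₂ F₂ (m+1)).card := by exact_mod_cast one_le_card_traj φ₂ hF2 _
  calc entWith φ₁ F₁ + entWith φ₂ F₂
      ≤ Real.log ((traj φ₁ F₁ (m+1)).card) / (m+1) + Real.log ((traj φ₂ F₂ (m+1)).card) / (m+1) :=
        add_le_add (entWith_le φ₁ F₁ m) (entWith_le φ₂ F₂ m)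
    _ = Real.log (((traj φ₁ F₁ (m+1)).card : ℝ) * ((traj φ₂ F₂ (m+1)).card : ℝ)) / (m+1) := by
        rw [Real.log_mul h1.ne' h2.ne', add_div]
    _ ≤ Real.log ((traj φ F (m+1)).card) / (m+1) := by
        gcongr
        exact_mod_cast h (m+1)

end Aux2

section Aux3

variable {G : Type*} [AddCommGroup G]

theorem mem_traj' (φ : AddMonoid.End G) {F : Finset G} (hF : F.Nonempty) (n : ℕ) (a : G) :
    a ∈ traj φ F n ↔
      ∃ x : ℕ → G, (∀ k, x k ∈ F) ∧ ∑ k ∈ Finset.range n, (φ ^ k) (x k) = a := by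
  rw [mem_traj]
  constructor
  · rintro ⟨f, hf, rfl⟩
    refine ⟨fun k => if h : k < n then (hf k h).choose else hF.choose, fun k => ?_, ?_⟩
    · by_cases h : k < n
      · simp only [dif_pos h]; exact (hf k h).choose_spec.1
      · simp only [dif_neg h]; exact hF.choose_spec
    · refine Finset.sum_congr rfl fun k hk => ?_
      simp only [dif_pos (Finset.mem_range.1 hk)]
      exact (hf k (Finset.mem_range.1 hk)).choose_spec.2
  · rintro ⟨x, hx, rfl⟩
    exact ⟨fun k => (φ ^ k) (x k), fun k _ => ⟨x k, hx k, rfl⟩, rfl⟩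

theorem zero_mem_traj (φ : AddMonoid.End G) {F : Finset G} (h0 : (0:G) ∈ F) (n : ℕ) :
    (0:G) ∈ traj φ F n := by
  refine (mem_traj' φ ⟨0, h0⟩ n 0).2 ⟨fun _ => 0, fun _ => h0, ?_⟩
  simp

theorem traj_mono_of_zero_mem (φ : AddMonoid.End G) {F : Finset G} (h0 : (0:G) ∈ F)
    {k n : ℕ} (hkn : k ≤ n) : traj φ F k ⊆ traj φ F n := by
  intro a ha
  obtain ⟨x, hx, hsum⟩ := (mem_traj' φ ⟨0, h0⟩ k a).1 ha
  refine (mem_traj' φ ⟨0, h0⟩ n a).2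
    ⟨fun i => if i < k then x i else 0, fun i => by by_cases h : i < k <;> simp only [h, if_true, if_false] <;> [exact hx i; exact h0], ?_⟩
  have h2 : ∑ i ∈ Finset.Ico k n, (φ ^ i) (if i < k then x i else 0) = 0 := by
    refine Finset.sum_eq_zero fun i hi => ?_
    have := Finset.mem_Ico.1 hi
    rw [if_neg (by omega), map_zero]
  rw [← Finset.sum_range_add_sum_Ico _ hkn, h2, add_zero, ← hsum]
  exact Finset.sum_congr rfl fun i hi => by simp only [if_pos (Finset.mem_range.1 hi)]

end Aux3

/-- The algebraic entropy `h(φ) = sup { H(φ,F) : F nonempty finite }`, valued in `[0,∞]`. -/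
noncomputable def algEnt {G : Type*} [AddCommGroup G] (φ : AddMonoid.End G) : ENNReal :=
  ⨆ (F : Finset G) (_ : F.Nonempty), ENNReal.ofReal (entWith φ F)

/-- The skew product `φ(x,y) = (φ₁(x), φ₂(y) + s(x))` of `φ₁` and `φ₂` via `s`. -/
def skewProd {K T : Type*} [AddCommGroup K] [AddCommGroup T]
    (φ₁ : AddMonoid.End K) (φ₂ : AddMonoid.End T) (s : K →+ T) :
    AddMonoid.End (K × T) where
  toFun p := (φ₁ p.1, φ₂ p.2 + s p.1)
  map_zero' := by simp
  map_add' p q := by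
    refine Prod.ext (by simp) ?_
    simp only [map_add]
    abel_nf
    simp [map_add]
    abel

section Skew

variable {K T : Type*} [AddCommGroup K] [AddCommGroup T]
  (φ₁ : AddMonoid.End K) (φ₂ : AddMonoid.End T) (s : K →+ T)

/-- The "error term" in the `k`-th power of the skew product. -/
def sig : ℕ → K → T
  | 0, _ => 0
  | k+1, x => φ₂ (sig k x) + s ((φ₁ ^ k) x)

theorem skewProd_apply (p : K × T) : skewProd φ₁ φ₂ s p = (φ₁ p.1, φ₂ p.2 + s p.1) := rfl

theorem skewProd_pow_apply (k : ℕ) (p : K × T) :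
    ((skewProd φ₁ φ₂ s) ^ k) p = ((φ₁ ^ k) p.1, (φ₂ ^ k) p.2 + sig φ₁ φ₂ s k p.1) := by
  induction k with
  | zero => simp [sig, AddMonoid.End.one_apply]
  | succ k ih =>
    rw [pow_succ', AddMonoid.End.coe_mul, Function.comp_apply, ih, skewProd_apply]
    refine Prod.ext ?_ ?_
    · simp [pow_succ', AddMonoid.End.coe_mul]
    · simp only [sig, map_add, pow_succ', AddMonoid.End.coe_mul, Function.comp_apply]
      abel

theorem traj_add_distrib {G : Type*} [AddCommGroup G] (φ : AddMonoid.End G) (F F' : Finset G)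
    (n : ℕ) :
    traj φ (letI := Classical.decEq G; F + F') n
      = (letI := Classical.decEq G; traj φ F n + traj φ F' n) := by
  classical
  unfold traj
  rw [← Finset.sum_add_distrib]
  refine Finset.sum_congr rfl fun k _ => Finset.image_add _

end Skew

section SkewCore

variable {K T : Type*} [AddCommGroup K] [AddCommGroup T]
  (φ₁ : AddMonoid.End K) (φ₂ : AddMonoid.End T) (s : K →+ T)
  {E₀ : Finset T}

theorem add_mem_trajE (hadd : ∀ a ∈ E₀, ∀ b ∈ E₀, a + b ∈ E₀) (h0 : (0:T) ∈ E₀) {n : ℕ}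
    {a b : T} (ha : a ∈ traj φ₂ E₀ n) (hb : b ∈ traj φ₂ E₀ n) : a + b ∈ traj φ₂ E₀ n := by
  obtain ⟨x, hx, rfl⟩ := (mem_traj' φ₂ ⟨0, h0⟩ n a).1 ha
  obtain ⟨y, hy, rfl⟩ := (mem_traj' φ₂ ⟨0, h0⟩ n b).1 hb
  refine (mem_traj' φ₂ ⟨0, h0⟩ n _).2 ⟨fun k => x k + y k, fun k => hadd _ (hx k) _ (hy k), ?_⟩
  rw [← Finset.sum_add_distrib]
  exact Finset.sum_congr rfl fun k _ => map_add _ _ _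

theorem neg_mem_trajE (hneg : ∀ a ∈ E₀, -a ∈ E₀) (h0 : (0:T) ∈ E₀) {n : ℕ}
    {a : T} (ha : a ∈ traj φ₂ E₀ n) : -a ∈ traj φ₂ E₀ n := by
  obtain ⟨x, hx, rfl⟩ := (mem_traj' φ₂ ⟨0, h0⟩ n a).1 ha
  refine (mem_traj' φ₂ ⟨0, h0⟩ n _).2 ⟨fun k => -(x k), fun k => hneg _ (hx k), ?_⟩
  rw [← Finset.sum_neg_distrib]
  exact Finset.sum_congr rfl fun k _ => map_neg _ _

theorem sum_mem_trajE (hadd : ∀ a ∈ E₀, ∀ b ∈ E₀, a + b ∈ E₀) (h0 : (0:T) ∈ E₀) {n : ℕ}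
    (m : ℕ) (g : ℕ → T) (hg : ∀ k < m, g k ∈ traj φ₂ E₀ n) :
    ∑ k ∈ Finset.range m, g k ∈ traj φ₂ E₀ n := by
  induction m with
  | zero => simpa using zero_mem_traj φ₂ h0 n
  | succ m ih =>
    rw [Finset.sum_range_succ]
    exact add_mem_trajE φ₂ hadd h0 (ih fun k hk => hg k (by omega)) (hg m m.lt_succ_self)

theorem sig_mem_trajE (hs : ∀ x : K, s x ∈ E₀) (hadd : ∀ a ∈ E₀, ∀ b ∈ E₀, a + b ∈ E₀)
    (h0 : (0:T) ∈ E₀) {k n : ℕ} (hkn : k ≤ n) (x : K) :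
    sig φ₁ φ₂ s k x ∈ traj φ₂ E₀ n := by
  refine traj_mono_of_zero_mem φ₂ h0 hkn ?_
  clear hkn
  induction k with
  | zero => exact zero_mem_traj φ₂ h0 0
  | succ k ih =>
    obtain ⟨e, he, hsum⟩ := (mem_traj' φ₂ ⟨0, h0⟩ k _).1 ih
    refine (mem_traj' φ₂ ⟨0, h0⟩ (k+1) _).2
      ⟨fun i => Nat.rec (s ((φ₁ ^ k) x)) (fun j _ => e j) i, fun i => ?_, ?_⟩
    · cases i with
      | zero => exact hs _
      | succ j => exact he j
    · rw [Finset.sum_range_succ']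
      show (∑ i ∈ Finset.range k, (φ₂ ^ (i+1)) (e i)) + (φ₂ ^ 0) (s ((φ₁ ^ k) x))
          = sig φ₁ φ₂ s (k+1) x
      have h1 : ∀ i ∈ Finset.range k, (φ₂ ^ (i+1)) (e i) = φ₂ ((φ₂ ^ i) (e i)) := fun i _ => by
        rw [pow_succ', AddMonoid.End.coe_mul, Function.comp_apply]
      rw [Finset.sum_congr rfl h1, ← map_sum, hsum, pow_zero, AddMonoid.End.one_apply]
      show φ₂ (sig φ₁ φ₂ s k x) + s ((φ₁ ^ k) x) = sig φ₁ φ₂ s (k+1) x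
      rfl

end SkewCore

section SkewMain

variable {K T : Type*} [AddCommGroup K] [AddCommGroup T]
  (φ₁ : AddMonoid.End K) (φ₂ : AddMonoid.End T) (s : K →+ T)
  {E₀ : Finset T}

theorem traj_skew_subset (hs : ∀ x : K, s x ∈ E₀) (hadd : ∀ a ∈ E₀, ∀ b ∈ E₀, a + b ∈ E₀)
    (h0 : (0:T) ∈ E₀) {F : Finset (K × T)} (hF : F.Nonempty) (n : ℕ) :
    traj (skewProd φ₁ φ₂ s) F n ⊆
      (letI := Classical.decEq K; letI := Classical.decEq T;
        (traj φ₁ (F.image Prod.fst) n) ×ˢ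
          (traj φ₂ (F.image Prod.snd) n + traj φ₂ E₀ n)) := by
  letI := Classical.decEq K; letI := Classical.decEq T
  intro a ha
  obtain ⟨p, hp, hsum⟩ := (mem_traj' (skewProd φ₁ φ₂ s) hF n a).1 ha
  have hps : ∀ k, ((skewProd φ₁ φ₂ s) ^ k) (p k)
      = ((φ₁ ^ k) (p k).1, (φ₂ ^ k) (p k).2 + sig φ₁ φ₂ s k (p k).1) := fun k =>
    skewProd_pow_apply φ₁ φ₂ s k (p k)
  rw [Finset.mem_product]
  constructor
  · refine (mem_traj' φ₁ (hF.image _) n a.1).2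
      ⟨fun k => (p k).1, fun k => Finset.mem_image_of_mem _ (hp k), ?_⟩
    rw [← hsum, Prod.fst_sum]
    exact Finset.sum_congr rfl fun k _ => by rw [hps k]
  · rw [Finset.mem_add]
    refine ⟨∑ k ∈ Finset.range n, (φ₂ ^ k) ((p k).2),
      (mem_traj' φ₂ (hF.image _) n _).2
        ⟨fun k => (p k).2, fun k => Finset.mem_image_of_mem _ (hp k), rfl⟩,
      ∑ k ∈ Finset.range n, sig φ₁ φ₂ s k ((p k).1),
      sum_mem_trajE φ₂ hadd h0 n _
        (fun k hk => sig_mem_trajE φ₁ φ₂ s hs hadd h0 hk.le _), ?_⟩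
    rw [← hsum, Prod.snd_sum, ← Finset.sum_add_distrib]
    exact (Finset.sum_congr rfl fun k _ => by rw [hps k]).symm

theorem prod_traj_subset_traj_skew (hs : ∀ x : K, s x ∈ E₀)
    (hadd : ∀ a ∈ E₀, ∀ b ∈ E₀, a + b ∈ E₀) (hneg : ∀ a ∈ E₀, -a ∈ E₀) (h0 : (0:T) ∈ E₀)
    {F₁ : Finset K} {F₂ : Finset T} (hF₁ : F₁.Nonempty) (hF₂ : F₂.Nonempty) (n : ℕ) :
    (traj φ₁ F₁ n) ×ˢ (traj φ₂ F₂ n) ⊆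
      traj (skewProd φ₁ φ₂ s) (letI := Classical.decEq T; F₁ ×ˢ (F₂ + E₀)) n := by
  letI := Classical.decEq T
  intro q hq
  rw [Finset.mem_product] at hq
  obtain ⟨x, hx, hxs⟩ := (mem_traj' φ₁ hF₁ n q.1).1 hq.1
  obtain ⟨y, hy, hys⟩ := (mem_traj' φ₂ hF₂ n q.2).1 hq.2
  have hC : ∑ k ∈ Finset.range n, sig φ₁ φ₂ s k (x k) ∈ traj φ₂ E₀ n :=
    sum_mem_trajE φ₂ hadd h0 n _ (fun k hk => sig_mem_trajE φ₁ φ₂ s hs hadd h0 hk.le _)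
  obtain ⟨e, he, hes⟩ := (mem_traj' φ₂ ⟨0, h0⟩ n _).1 (neg_mem_trajE φ₂ hneg h0 hC)
  refine (mem_traj' (skewProd φ₁ φ₂ s)
    ⟨(hF₁.choose, hF₂.choose + 0), Finset.mem_product.2
      ⟨hF₁.choose_spec, Finset.add_mem_add hF₂.choose_spec h0⟩⟩ n q).2
    ⟨fun k => (x k, y k + e k),
      fun k => Finset.mem_product.2 ⟨hx k, Finset.add_mem_add (hy k) (he k)⟩, ?_⟩
  have hps : ∀ k ∈ Finset.range n, ((skewProd φ₁ φ₂ s) ^ k) ((x k, y k + e k))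
      = ((φ₁ ^ k) (x k), (φ₂ ^ k) (y k) + ((φ₂ ^ k) (e k) + sig φ₁ φ₂ s k (x k))) := by
    intro k _
    rw [skewProd_pow_apply]
    refine Prod.ext rfl ?_
    show (φ₂ ^ k) (y k + e k) + sig φ₁ φ₂ s k (x k) = _
    rw [map_add]
    abel
  rw [Finset.sum_congr rfl hps]
  refine Prod.ext ?_ ?_
  · rw [Prod.fst_sum]
    exact hxs
  · rw [Prod.snd_sum]
    show ∑ k ∈ Finset.range n, ((φ₂ ^ k) (y k) + ((φ₂ ^ k) (e k) + sig φ₁ φ₂ s k (x k))) = q.2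
    rw [Finset.sum_add_distrib, Finset.sum_add_distrib, hys, hes]
    simp

end SkewMain

/-- Addition Theorem for a skew product over a torsion group with finite `s(K)`:
`h(φ) = h(φ₁) + h(φ₂)`. -/
theorem stmt11 {K T : Type*} [AddCommGroup K] [AddCommGroup T]
    (htor : ∀ t : T, ∃ n : ℕ, 0 < n ∧ n • t = 0)
    (φ₁ : AddMonoid.End K) (φ₂ : AddMonoid.End T) (s : K →+ T)
    (hfin : (Set.range s).Finite) :
    algEnt (skewProd φ₁ φ₂ s) = algEnt φ₁ + algEnt φ₂ := by
  letI := Classical.decEq K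
  letI := Classical.decEq T
  letI := Classical.decEq (K × T)
  have htT : AddMonoid.IsTorsion T := fun t => isOfFinAddOrder_iff_nsmul_eq_zero.2 (htor t)
  haveI : Finite (Set.range ⇑s) := hfin
  haveI : AddGroup.FG (AddSubgroup.closure (Set.range ⇑s)) := AddGroup.closure_finite_fg _
  haveI : Finite (AddSubgroup.closure (Set.range ⇑s)) :=
    AddCommGroup.finite_of_fg_torsion _ (IsTorsion.addSubgroup htT _)
  have hclf : ((AddSubgroup.closure (Set.range ⇑s) : AddSubgroup T) : Set T).Finite :=
    Set.toFinite _
  set E₀ : Finset T := hclf.toFinset with hE₀def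
  have hmem : ∀ t : T, t ∈ E₀ ↔ t ∈ AddSubgroup.closure (Set.range ⇑s) := fun t =>
    Set.Finite.mem_toFinset hclf
  have hs' : ∀ x : K, s x ∈ E₀ := fun x => (hmem _).2 (AddSubgroup.subset_closure ⟨x, rfl⟩)
  have h0 : (0:T) ∈ E₀ := (hmem _).2 (AddSubgroup.zero_mem _)
  have hadd : ∀ a ∈ E₀, ∀ b ∈ E₀, a + b ∈ E₀ := fun a ha b hb =>
    (hmem _).2 (AddSubgroup.add_mem _ ((hmem _).1 ha) ((hmem _).1 hb))
  have hneg : ∀ a ∈ E₀, -a ∈ E₀ := fun a ha => (hmem _).2 (AddSubgroup.neg_mem _ ((hmem _).1 ha))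
  apply le_antisymm
  · unfold algEnt
    refine iSup₂_le fun F hF => ?_
    have hF1 : (F.image Prod.fst).Nonempty := hF.image _
    have hF2 : (F.image Prod.snd + E₀).Nonempty := (hF.image _).add ⟨0, h0⟩
    have hcard : ∀ n, (traj (skewProd φ₁ φ₂ s) F n).card ≤
        (traj φ₁ (F.image Prod.fst) n).card * (traj φ₂ (F.image Prod.snd + E₀) n).card := by
      intro n
      refine le_trans (Finset.card_le_card (traj_skew_subset φ₁ φ₂ s hs' hadd h0 hF n)) ?_
      rw [traj_add_distrib, Finset.card_product]
    have hle := entWith_le_add_of_card_le hF hF1 hF2 hcard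
    calc ENNReal.ofReal (entWith (skewProd φ₁ φ₂ s) F)
        ≤ ENNReal.ofReal (entWith φ₁ (F.image Prod.fst) + entWith φ₂ (F.image Prod.snd + E₀)) :=
          ENNReal.ofReal_le_ofReal hle
      _ ≤ ENNReal.ofReal (entWith φ₁ (F.image Prod.fst))
          + ENNReal.ofReal (entWith φ₂ (F.image Prod.snd + E₀)) := ENNReal.ofReal_add_le
      _ ≤ (⨆ (F₁ : Finset K) (_ : F₁.Nonempty), ENNReal.ofReal (entWith φ₁ F₁))
          + ⨆ (F₂ : Finset T) (_ : F₂.Nonempty), ENNReal.ofReal (entWith φ₂ F₂) :=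
          add_le_add
            (le_iSup₂ (κ := fun F₁ : Finset K => F₁.Nonempty) (f := fun F₁ _ => ENNReal.ofReal (entWith φ₁ F₁)) _ hF1)
            (le_iSup₂ (κ := fun F₂ : Finset T => F₂.Nonempty) (f := fun F₂ _ => ENNReal.ofReal (entWith φ₂ F₂)) _ hF2)
  · unfold algEnt
    refine ENNReal.biSup_add_biSup_le' ⟨{0}, ⟨0, Finset.mem_singleton_self 0⟩⟩
      ⟨{0}, ⟨0, Finset.mem_singleton_self 0⟩⟩ fun F₁ hF₁ F₂ hF₂ => ?_
    have hF' : (F₁ ×ˢ (F₂ + E₀)).Nonempty :=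
      ⟨(hF₁.choose, hF₂.choose + 0), Finset.mem_product.2
        ⟨hF₁.choose_spec, Finset.add_mem_add hF₂.choose_spec h0⟩⟩
    have hcard : ∀ n, (traj φ₁ F₁ n).card * (traj φ₂ F₂ n).card ≤
        (traj (skewProd φ₁ φ₂ s) (F₁ ×ˢ (F₂ + E₀)) n).card := fun n => by
      rw [← Finset.card_product]
      exact Finset.card_le_card (prod_traj_subset_traj_skew φ₁ φ₂ s hs' hadd hneg h0 hF₁ hF₂ n)
    have hle := add_entWith_le_of_card_le hF₁ hF₂ hcard
    calc ENNReal.ofReal (entWith φ₁ F₁) + ENNReal.ofReal (entWith φ₂ F₂)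
        = ENNReal.ofReal (entWith φ₁ F₁ + entWith φ₂ F₂) :=
          (ENNReal.ofReal_add (entWith_nonneg φ₁ hF₁) (entWith_nonneg φ₂ hF₂)).symm
      _ ≤ ENNReal.ofReal (entWith (skewProd φ₁ φ₂ s) (F₁ ×ˢ (F₂ + E₀))) :=
          ENNReal.ofReal_le_ofReal hle
      _ ≤ ⨆ (F : Finset (K × T)) (_ : F.Nonempty),
            ENNReal.ofReal (entWith (skewProd φ₁ φ₂ s) F) :=
          le_iSup₂ (κ := fun F : Finset (K × T) => F.Nonempty) (f := fun F _ =>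
            ENNReal.ofReal (entWith (skewProd φ₁ φ₂ s) F)) _ hF'
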